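/- arXiv:1411.2742 — 2 statements merged into one kernel-verified Lean document; each statement's English description precedes it below -/
import Mathlib

section
/- For a positive integer N, the group of units (ℤ/Nℤ)^× has exponent dividing 2 if and only if N divides 24. -/
lemma fact24_2 : (Nat.factorization 24) 2 = 3 := by
  rw [show (24:ℕ) = 2^3*3 by norm_num, Nat.factorization_mul (by norm_num) (by norm_num),
    Nat.Prime.factorization_pow, Nat.Prime.factorization]
  · simp
  · norm_num
  · norm_num

lemma fact24_3 : (Nat.factorization 24) 3 = 1 := by
  rw [show (24:ℕ) = 2^3*3 by norm_num, Nat.factorization_mul (by norm_num) (by norm_num),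
    Nat.Prime.factorization_pow, Nat.Prime.factorization]
  · simp
  · norm_num
  · norm_num

lemma descend (N d : ℕ) [NeZero N] (hd : d ∣ N) (h : ∀ u : (ZMod N)ˣ, u ^ 2 = 1) :
    ∀ v : (ZMod d)ˣ, v ^ 2 = 1 := by
  intro v
  obtain ⟨u, rfl⟩ := ZMod.unitsMap_surjective hd v
  rw [← map_pow, h u, map_one]

theorem stmt_1 (N : ℕ) (hN : 0 < N) :
    (∀ u : (ZMod N)ˣ, u ^ 2 = 1) ↔ N ∣ 24 := by
  haveI : NeZero N := ⟨hN.ne'⟩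
  constructor
  · intro h
    rw [← Nat.factorization_le_iff_dvd hN.ne' (by norm_num)]
    intro p
    by_cases hp : p.Prime
    · have key : ∀ d : ℕ, d ∣ N → ∀ a : (ZMod d)ˣ, ((a : ZMod d) ^ 2 = 1) := by
        intro d hd a
        have := descend N d hd h a
        calc ((a : ZMod d) ^ 2) = ((a ^ 2 : (ZMod d)ˣ) : ZMod d) := by push_cast; ring
          _ = 1 := by rw [this]; rfl
      rcases lt_or_ge p 5 with h5 | h5
      · interval_cases p
        · exact absurd hp (by norm_num)
        · exact absurd hp (by norm_num)
        · -- p = 2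
          have h16 : ¬ ((2:ℕ)^4 ∣ N) := by
            intro h16
            have := key 16 (by norm_num at h16 ⊢; exact h16) (ZMod.unitOfCoprime 3 (by decide))
            revert this; decide
          rw [Nat.Prime.pow_dvd_iff_le_factorization Nat.prime_two hN.ne'] at h16
          rw [fact24_2]; omega
        · -- p = 3
          have h9 : ¬ ((3:ℕ)^2 ∣ N) := by
            intro h9
            have := key 9 (by norm_num at h9 ⊢; exact h9) (ZMod.unitOfCoprime 2 (by decide))
            revert this; decide
          rw [Nat.Prime.pow_dvd_iff_le_factorization Nat.prime_three hN.ne'] at h9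
          rw [fact24_3]; omega
        · exact absurd hp (by norm_num)
      · -- p ≥ 5 prime: p ∤ N
        have hpn : ¬ p ∣ N := by
          intro hdvd
          haveI : Fact p.Prime := ⟨hp⟩
          have hco : Nat.Coprime 2 p := (Nat.coprime_primes Nat.prime_two hp).mpr (by omega)
          have h2 := key p hdvd (ZMod.unitOfCoprime 2 hco)
          rw [ZMod.coe_unitOfCoprime] at h2
          have h3 : ((3 : ℕ) : ZMod p) = 0 := by push_cast; linear_combination h2
          have := (ZMod.natCast_eq_zero_iff 3 p).mp h3
          have := Nat.le_of_dvd (by norm_num) this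
          omega
        simp [Nat.factorization_eq_zero_of_not_dvd hpn]
    · simp [Nat.factorization_eq_zero_of_not_prime _ hp]
  · intro hdvd u
    have h24 : ∀ v : (ZMod 24)ˣ, v ^ 2 = 1 := by decide
    obtain ⟨v, rfl⟩ := ZMod.unitsMap_surjective (m := 24) hdvd u
    rw [← map_pow, h24 v, map_one]
end

section
/- Let R be a Noetherian integral domain of Krull dimension 1 with fraction field K, and let I be a nonzero ideal with I ⊊ R. Then the colon ideal (R : I) = {x ∈ K : x·I ⊆ R} strictly contains R. -/
open FractionalIdeal
open scoped nonZeroDivisors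

section aux

variable {A : Type*} [CommRing A] [IsDomain A] [IsNoetherianRing A] [Ring.DimensionLEOne A]

theorem aux_exists_multiset_prod_cons_le_and_prod_not_le (hNF : ¬IsField A)
    {I M : Ideal A} (hI0 : I ≠ ⊥) (hIM : I ≤ M) [hM : M.IsMaximal] :
    ∃ Z : Multiset (PrimeSpectrum A),
      (M ::ₘ Z.map PrimeSpectrum.asIdeal).prod ≤ I ∧
        ¬Multiset.prod (Z.map PrimeSpectrum.asIdeal) ≤ I := by
  obtain ⟨Z₀, hZ₀⟩ := PrimeSpectrum.exists_primeSpectrum_prod_le_and_ne_bot_of_domain hNF hI0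
  obtain ⟨Z, ⟨hZI, hprodZ⟩, h_eraseZ⟩ :=
    wellFounded_lt.has_min
      {Z | (Z.map PrimeSpectrum.asIdeal).prod ≤ I ∧ (Z.map PrimeSpectrum.asIdeal).prod ≠ ⊥}
      ⟨Z₀, hZ₀.1, hZ₀.2⟩
  obtain ⟨_, hPZ', hPM⟩ := hM.isPrime.multiset_prod_le.mp (hZI.trans hIM)
  obtain ⟨P, hPZ, rfl⟩ := Multiset.mem_map.mp hPZ'
  classical
    have := Multiset.map_erase PrimeSpectrum.asIdeal (fun _ _ => PrimeSpectrum.ext) P Z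
    obtain ⟨hP0, hZP0⟩ : P.asIdeal ≠ ⊥ ∧ ((Z.erase P).map PrimeSpectrum.asIdeal).prod ≠ ⊥ := by
      rwa [Ne, ← Multiset.cons_erase hPZ', Multiset.prod_cons, Ideal.mul_eq_bot, not_or, ←
        this] at hprodZ
    have hPM' := (P.isPrime.isMaximal hP0).eq_of_le hM.ne_top hPM
    subst hPM'
    refine ⟨Z.erase P, ?_, ?_⟩
    · convert hZI
      rw [this, Multiset.cons_erase hPZ']
    · refine fun h => h_eraseZ (Z.erase P) ⟨h, ?_⟩ (Multiset.erase_lt.mpr hPZ)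
      exact hZP0

variable (K : Type*) [Field K] [Algebra A K] [IsFractionRing A K]

theorem aux_not_inv_le_one_of_ne_bot {I : Ideal A}
    (hI0 : I ≠ ⊥) (hI1 : I ≠ ⊤) : ¬((I : FractionalIdeal A⁰ K)⁻¹) ≤ 1 := by
  have hNF : ¬IsField A := fun h ↦ letI := h.toField; (eq_bot_or_eq_top I).elim hI0 hI1
  wlog hM : I.IsMaximal generalizing I
  · rcases I.exists_le_maximal hI1 with ⟨M, hmax, hIM⟩
    have hMbot : M ≠ ⊥ := (M.bot_lt_of_maximal hNF).ne'
    refine mt (le_trans <| inv_anti_mono ?_ ?_ ?_) (this hMbot hmax.ne_top hmax) <;>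
      simpa only [coeIdeal_ne_zero, coeIdeal_le_coeIdeal]
  have hI0 : ⊥ < I := I.bot_lt_of_maximal hNF
  obtain ⟨⟨a, haI⟩, ha0⟩ := Submodule.nonzero_mem_of_bot_lt hI0
  replace ha0 : a ≠ 0 := Subtype.coe_injective.ne ha0
  let J : Ideal A := Ideal.span {a}
  have hJ0 : J ≠ ⊥ := mt Ideal.span_singleton_eq_bot.mp ha0
  have hJI : J ≤ I := I.span_singleton_le_iff_mem.2 haI
  obtain ⟨Z, hle, hnle⟩ := aux_exists_multiset_prod_cons_le_and_prod_not_le hNF hJ0 hJI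
  obtain ⟨b, hbZ, hbJ⟩ := SetLike.not_le_iff_exists.mp hnle
  have hnz_fa : algebraMap A K a ≠ 0 :=
    mt ((injective_iff_map_eq_zero _).mp (IsFractionRing.injective A K) a) ha0
  refine Set.not_subset.2 ⟨algebraMap A K b * (algebraMap A K a)⁻¹, (mem_inv_iff ?_).mpr ?_, ?_⟩
  · exact coeIdeal_ne_zero.mpr hI0.ne'
  · rintro y₀ hy₀
    obtain ⟨y, h_Iy, rfl⟩ := (mem_coeIdeal _).mp hy₀
    rw [mul_comm, ← mul_assoc, ← RingHom.map_mul]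
    have h_yb : y * b ∈ J := by
      apply hle
      rw [Multiset.prod_cons]
      exact Submodule.smul_mem_smul h_Iy hbZ
    rw [Ideal.mem_span_singleton'] at h_yb
    rcases h_yb with ⟨c, hc⟩
    rw [← hc, RingHom.map_mul, mul_assoc, mul_inv_cancel₀ hnz_fa, mul_one]
    apply coe_mem_one
  · refine mt (mem_one_iff _).mp ?_
    rintro ⟨x', h₂_abs⟩
    rw [← div_eq_mul_inv, eq_div_iff_mul_eq hnz_fa, ← RingHom.map_mul] at h₂_abs
    have := Ideal.mem_span_singleton'.mpr ⟨x', IsFractionRing.injective A K h₂_abs⟩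
    contradiction

end aux

theorem stmt_14 (R : Type*) [CommRing R] [IsDomain R] [IsNoetherianRing R]
    (hdim : ringKrullDim R = 1) (I : Ideal R) (hI0 : I ≠ ⊥) (hIR : I ≠ ⊤) :
    ∃ x : FractionRing R,
      x ∉ Set.range (algebraMap R (FractionRing R)) ∧
      ∀ y ∈ I, x * algebraMap R (FractionRing R) y ∈
        Set.range (algebraMap R (FractionRing R)) := by
  have hd1 : Ring.DimensionLEOne R := by
    constructor
    intro p hp hprime
    by_contra hnotmax
    obtain ⟨M, hM, hpM⟩ := p.exists_le_maximal hprime.ne_top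
    have hpltM : p < M := lt_of_le_of_ne hpM (by rintro rfl; exact hnotmax hM)
    let c : LTSeries (PrimeSpectrum R) :=
      RelSeries.fromListIsChain [⟨⊥, Ideal.bot_prime⟩, ⟨p, hprime⟩, ⟨M, hM.isPrime⟩]
        (by simp) (by
          simp only [List.isChain_cons_cons, List.isChain_singleton, and_true]
          exact ⟨(PrimeSpectrum.asIdeal_lt_asIdeal _ _).mp (Ne.bot_lt hp),
            (PrimeSpectrum.asIdeal_lt_asIdeal _ _).mp hpltM⟩)
    have hlen : c.length = 2 := rfl
    have := Order.LTSeries.length_le_krullDim c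
    rw [hlen] at this
    rw [ringKrullDim] at hdim
    rw [hdim] at this
    norm_num at this
  obtain ⟨x, hxmem, hxnot⟩ := Set.not_subset.1
    (aux_not_inv_le_one_of_ne_bot (A := R) (FractionRing R) hI0 hIR)
  refine ⟨x, ?_, ?_⟩
  · intro hx
    exact hxnot ((FractionalIdeal.mem_one_iff _).mpr (by rwa [Set.mem_range] at hx))
  · intro y hy
    have := (FractionalIdeal.mem_inv_iff (FractionalIdeal.coeIdeal_ne_zero.mpr hI0)).mp
      hxmem (algebraMap R (FractionRing R) y) (FractionalIdeal.mem_coeIdeal_of_mem _ hy)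
    obtain ⟨z, hz⟩ := (FractionalIdeal.mem_one_iff _).mp this
    exact ⟨z, hz⟩
end
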